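/- Let g be a loxodromic isometry of a δ-hyperbolic geodesic space S, and for ε ≥ 0 let A_ε(g) = {x ∈ S : d(x, gx) ≤ [g] + ε} be the ε-axis of g, where [g] is the translation length. Suppose additionally g belongs to a group acting acylindrically on S. Then there is a constant ν = ν(δ, ε) > 0 such that for all nonzero integers n, m, the Hausdorff distance between A_ε(g^n) and A_ε(g^m) is at most ν. -/

import Mathlib

/-- A unit-speed geodesic parametrization from `x` to `y`. -/
def IsGeodesicSegment {S : Type*} [MetricSpace S] (f : ℝ → S) (x y : S) : Prop :=
  f 0 = x ∧ f (dist x y) = y ∧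
    ∀ a ∈ Set.Icc (0:ℝ) (dist x y), ∀ b ∈ Set.Icc (0:ℝ) (dist x y), dist (f a) (f b) = |a - b|

/-- A metric space is geodesic if any two points are joined by a geodesic. -/
def GeodesicSpace (S : Type*) [MetricSpace S] : Prop :=
  ∀ x y : S, ∃ f : ℝ → S, IsGeodesicSegment f x y

/-- The Gromov product `(x,y)_z`. -/
noncomputable def GromovProd {S : Type*} [MetricSpace S] (x y z : S) : ℝ :=
  (dist z x + dist z y - dist x y) / 2

/-- Every geodesic triangle is `δ`-thin at each of its vertices. -/
def ThinTriangles (δ : ℝ) (S : Type*) [MetricSpace S] : Prop :=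
  ∀ (A B C : S) (f g : ℝ → S), IsGeodesicSegment f C A → IsGeodesicSegment g C B →
    ∀ t ∈ Set.Icc (0:ℝ) (GromovProd A B C), dist (f t) (g t) ≤ δ

/-- A `δ`-hyperbolic space: geodesic, with all triangles `δ`-thin at the vertices. -/
def DeltaHyperbolic (δ : ℝ) (S : Type*) [MetricSpace S] : Prop :=
  GeodesicSpace S ∧ ThinTriangles δ S

/-- The group `G` acts on `S` by isometries. -/
def IsometricAction (G S : Type*) [Group G] [MulAction G S] [MetricSpace S] : Prop :=
  ∀ g : G, Isometry fun t : S => g • t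

/-- The action of `G` on `S` is cobounded: `S = G · B` for some bounded `B`. -/
def CoboundedAction (G S : Type*) [Group G] [MulAction G S] [MetricSpace S] : Prop :=
  ∃ B : Set S, Bornology.IsBounded B ∧ ∀ t : S, ∃ g : G, ∃ b ∈ B, t = g • b

/-- Bowditch's acylindricity condition for the action of `G` on `S`. -/
def AcylindricalAction (G S : Type*) [Group G] [MulAction G S] [MetricSpace S] : Prop :=
  ∀ ε : ℝ, 0 < ε → ∃ R : ℝ, ∃ N : ℕ, 0 < R ∧ ∀ p q : S, R ≤ dist p q →
    {g : G | dist p (g • p) ≤ ε ∧ dist q (g • q) ≤ ε}.Finite ∧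
    {g : G | dist p (g • p) ≤ ε ∧ dist q (g • q) ≤ ε}.ncard ≤ N

/-- `g` is elliptic: the orbits of `⟨g⟩` are bounded. -/
def IsEllipticElt {G : Type*} (S : Type*) [Group G] [MulAction G S] [MetricSpace S]
    (g : G) : Prop :=
  ∀ s : S, Bornology.IsBounded (Set.range fun n : ℤ => (g ^ n) • s)

/-- `g` is loxodromic: `n ↦ gⁿ • s` is a quasi-isometric embedding of `ℤ`. -/
def IsLoxodromicElt {G : Type*} (S : Type*) [Group G] [MulAction G S] [MetricSpace S]
    (g : G) : Prop :=
  ∃ s : S, ∃ κ ε : ℝ, 1 ≤ κ ∧ 0 ≤ ε ∧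
    ∀ n m : ℤ, |(n : ℝ) - (m : ℝ)| / κ - ε ≤ dist ((g ^ n) • s) ((g ^ m) • s)

/-- The translation length `[g] = inf_{s ∈ S} d(s, g s)`. -/
noncomputable def translationLength {G : Type*} (S : Type*) [Group G] [MulAction G S]
    [MetricSpace S] (g : G) : ℝ :=
  ⨅ s : S, dist s (g • s)

/-- The `ε`-axis `A_ε(g) = {x ∈ S | d(x, g x) ≤ [g] + ε}`. -/
def epsAxis {G : Type*} (S : Type*) [Group G] [MulAction G S] [MetricSpace S]
    (ε : ℝ) (g : G) : Set S :=
  {x : S | dist x (g • x) ≤ translationLength S g + ε}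

section Basic
variable {S : Type*} [MetricSpace S]

lemma gp_nonneg (x y z : S) : 0 ≤ GromovProd x y z := by
  have h := dist_triangle x z y
  unfold GromovProd
  rw [dist_comm z x]
  linarith

lemma gp_le_left (x y z : S) : GromovProd x y z ≤ dist z x := by
  have h := dist_triangle z x y
  unfold GromovProd
  linarith

lemma gp_le_right (x y z : S) : GromovProd x y z ≤ dist z y := by
  have h := dist_triangle z y x
  unfold GromovProd
  rw [dist_comm y x] at h
  linarith

lemma gp_comm (x y z : S) : GromovProd x y z = GromovProd y x z := by
  unfold GromovProd; rw [dist_comm x y]; ring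

/-- `(x,y)_z + (z,y)_x = d(x,z)` -/
lemma gp_add (x y z : S) : GromovProd x y z + GromovProd z y x = dist x z := by
  unfold GromovProd
  rw [dist_comm z x]
  ring

lemma gp_self (x y : S) : GromovProd x y x = 0 := by
  unfold GromovProd; simp

lemma gp_self' (x y : S) : GromovProd y y x = dist x y := by
  unfold GromovProd; simp

/-- Lipschitz in the first argument. -/
lemma gp_lip (x x' y z : S) : GromovProd x y z ≤ GromovProd x' y z + dist x x' := by
  unfold GromovProd
  have h1 := dist_triangle z x' x
  have h2 := dist_triangle x' x y
  linarith [dist_comm z x', dist_comm x' x, dist_comm x x', dist_comm x' z]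

end Basic

section Geo
variable {S : Type*} [MetricSpace S] {δ : ℝ}

lemma geo_mem_param {f : ℝ → S} {x y : S} (hf : IsGeodesicSegment f x y)
    {t : ℝ} (h0 : 0 ≤ t) (h1 : t ≤ dist x y) : dist x (f t) = t ∧ dist (f t) y = dist x y - t := by
  obtain ⟨hx, hy, hiso⟩ := hf
  have hd : (0:ℝ) ∈ Set.Icc (0:ℝ) (dist x y) := ⟨le_refl _, dist_nonneg⟩
  have ht : t ∈ Set.Icc (0:ℝ) (dist x y) := ⟨h0, h1⟩
  have hD : dist x y ∈ Set.Icc (0:ℝ) (dist x y) := ⟨dist_nonneg, le_refl _⟩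
  constructor
  · have := hiso 0 hd t ht
    rw [hx] at this
    rw [this]
    rw [abs_of_nonpos (by linarith)]; ring
  · have := hiso t ht (dist x y) hD
    rw [hy] at this
    rw [this, abs_of_nonpos (by linarith)]; ring

lemma geo_reverse {f : ℝ → S} {x y : S} (hf : IsGeodesicSegment f x y) :
    IsGeodesicSegment (fun t => f (dist x y - t)) y x := by
  obtain ⟨hx, hy, hiso⟩ := hf
  have hc : dist y x = dist x y := dist_comm y x
  refine ⟨by simp [hy], by simp [hc, hx], ?_⟩
  intro a ha b hb
  rw [hc] at ha hb
  have h1 : dist x y - a ∈ Set.Icc (0:ℝ) (dist x y) := ⟨by linarith [ha.2], by linarith [ha.1]⟩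
  have h2 : dist x y - b ∈ Set.Icc (0:ℝ) (dist x y) := ⟨by linarith [hb.2], by linarith [hb.1]⟩
  rw [hiso _ h1 _ h2]
  rw [abs_sub_comm]
  congr 1; ring

variable {G : Type*} [Group G] [MulAction G S]

lemma dist_smul_eq (hiso : IsometricAction G S) (h : G) (a b : S) :
    dist (h • a) (h • b) = dist a b := (hiso h).dist_eq a b

lemma gp_smul (hiso : IsometricAction G S) (h : G) (a b c : S) :
    GromovProd (h • a) (h • b) (h • c) = GromovProd a b c := by
  unfold GromovProd
  rw [dist_smul_eq hiso, dist_smul_eq hiso, dist_smul_eq hiso]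

lemma geo_smul (hiso : IsometricAction G S) (h : G) {f : ℝ → S} {x y : S}
    (hf : IsGeodesicSegment f x y) : IsGeodesicSegment (fun t => h • f t) (h • x) (h • y) := by
  obtain ⟨hx, hy, hisom⟩ := hf
  have hd : dist (h • x) (h • y) = dist x y := dist_smul_eq hiso h x y
  refine ⟨by simp only []; rw [hx], by simp only []; rw [hd, hy], ?_⟩
  intro a ha b hb
  rw [hd] at ha hb
  rw [dist_smul_eq hiso]
  exact hisom a ha b hb

end Geo

section Hyp
variable {S : Type*} [MetricSpace S] {δ : ℝ}

/-- The four-point inequality. -/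
lemma fourpt (hδ : 0 ≤ δ) (hhyp : DeltaHyperbolic δ S) (c a x b : S) :
    min (GromovProd a x c) (GromovProd x b c) - δ ≤ GromovProd a b c := by
  obtain ⟨hgeo, hthin⟩ := hhyp
  obtain ⟨f, hf⟩ := hgeo c a
  obtain ⟨k, hk⟩ := hgeo c x
  obtain ⟨gg, hg⟩ := hgeo c b
  set t := min (GromovProd a x c) (GromovProd x b c) with ht
  have ht0 : 0 ≤ t := le_min (gp_nonneg _ _ _) (gp_nonneg _ _ _)
  have h1 : dist (f t) (k t) ≤ δ :=
    hthin a x c f k hf hk t ⟨ht0, min_le_left _ _⟩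
  have h2 : dist (k t) (gg t) ≤ δ :=
    hthin x b c k gg hk hg t ⟨ht0, min_le_right _ _⟩
  have hta : t ≤ dist c a := le_trans (min_le_left _ _) (gp_le_left _ _ _)
  have htb : t ≤ dist c b := le_trans (min_le_right _ _) (gp_le_right _ _ _)
  have hfa := geo_mem_param hf ht0 hta
  have hgb := geo_mem_param hg ht0 htb
  have htr : dist a b ≤ dist a (f t) + dist (f t) (k t) + dist (k t) (gg t) + dist (gg t) b := by
    calc dist a b ≤ dist a (gg t) + dist (gg t) b := dist_triangle _ _ _
      _ ≤ (dist a (f t) + dist (f t) (gg t)) + dist (gg t) b := by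
          linarith [dist_triangle a (f t) (gg t)]
      _ ≤ _ := by linarith [dist_triangle (f t) (k t) (gg t)]
  have hda : dist a (f t) = dist c a - t := by rw [dist_comm]; exact hfa.2
  have hdb : dist (gg t) b = dist c b - t := hgb.2
  unfold GromovProd
  rw [dist_comm c a] at hda
  have : dist a b ≤ (dist c a - t) + δ + δ + (dist c b - t) := by
    rw [dist_comm a c] at hda
    linarith
  linarith

/-- Any point is close to the geodesic, at parameter `(z,B)_A`. -/
lemma near_geod (hδ : 0 ≤ δ) (hhyp : DeltaHyperbolic δ S) {γ : ℝ → S} {A B : S}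
    (hγ : IsGeodesicSegment γ A B) (z : S) :
    dist z (γ (GromovProd z B A)) ≤ GromovProd A B z + δ := by
  obtain ⟨f₂, hf₂⟩ := hhyp.1 A z
  set t := GromovProd z B A with htdef
  have ht0 : 0 ≤ t := gp_nonneg _ _ _
  have hthin := hhyp.2 z B A f₂ γ hf₂ hγ t ⟨ht0, le_refl _⟩
  have hta : t ≤ dist A z := gp_le_left _ _ _
  have hfz := geo_mem_param hf₂ ht0 hta
  have hid : GromovProd z B A + GromovProd A B z = dist z A := gp_add z B A
  have : dist z (f₂ t) = dist A z - t := by rw [dist_comm]; exact hfz.2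
  calc dist z (γ t) ≤ dist z (f₂ t) + dist (f₂ t) (γ t) := dist_triangle _ _ _
    _ ≤ (dist A z - t) + δ := by rw [this]; linarith
    _ = GromovProd A B z + δ := by rw [dist_comm z A] at hid; linarith

/-- Thin triangles: a point on side AB is δ-close to side AC or side CB. -/
lemma tri_thin (hδ : 0 ≤ δ) (hhyp : DeltaHyperbolic δ S) {A B C : S}
    {γAB γAC γCB : ℝ → S} (hAB : IsGeodesicSegment γAB A B) (hAC : IsGeodesicSegment γAC A C)
    (hCB : IsGeodesicSegment γCB C B) {t : ℝ} (ht : t ∈ Set.Icc (0:ℝ) (dist A B)) :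
    (∃ t' ∈ Set.Icc (0:ℝ) (dist A C), dist (γAB t) (γAC t') ≤ δ) ∨
    (∃ t' ∈ Set.Icc (0:ℝ) (dist C B), dist (γAB t) (γCB t') ≤ δ) := by
  by_cases hcase : t ≤ GromovProd B C A
  · left
    refine ⟨t, ⟨ht.1, le_trans hcase (gp_le_right _ _ _)⟩, ?_⟩
    exact hhyp.2 B C A γAB γAC hAB hAC t ⟨ht.1, hcase⟩
  · right
    push_neg at hcase
    set t' := dist A B - t with ht'def
    have hid : GromovProd B C A + GromovProd A C B = dist B A := gp_add B C A
    have ht'0 : 0 ≤ t' := by simp [ht'def]; linarith [ht.2]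
    have ht'P : t' ≤ GromovProd A C B := by
      rw [dist_comm B A] at hid
      simp only [ht'def]
      linarith
    have hrAB := geo_reverse hAB
    have hrCB := geo_reverse hCB
    have hthin := hhyp.2 A C B (fun u => γAB (dist A B - u)) (fun u => γCB (dist C B - u))
      (by simpa [dist_comm B A] using hrAB) (by simpa [dist_comm B C] using hrCB)
      t' ⟨ht'0, ht'P⟩
    refine ⟨dist C B - t', ⟨?_, ?_⟩, ?_⟩
    · have : t' ≤ dist B C := le_trans ht'P (gp_le_right _ _ _)
      rw [dist_comm C B]; linarith
    · linarith [ht'0]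
    · simp only [ht'def] at hthin
      have he : dist A B - (dist A B - t) = t := by ring
      rw [he] at hthin
      exact hthin

end Hyp

section Disp
variable {S G : Type*} [MetricSpace S] [Group G] [MulAction G S] {δ : ℝ}

/-- Displacement reduction along the geodesic `[x, h x]`. -/
lemma disp_step (hδ : 0 ≤ δ) (hhyp : DeltaHyperbolic δ S) (hiso : IsometricAction G S)
    (h : G) (x : S) {t : ℝ} (ht0 : 0 ≤ t)
    (htP : t ≤ GromovProd (h⁻¹ • x) (h • x) x) (htd : 2 * t ≤ dist x (h • x)) :
    ∃ x' : S, dist x x' = t ∧ dist x' (h • x') ≤ dist x (h • x) - 2 * t + δ := by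
  obtain ⟨f, hf⟩ := hhyp.1 x (h • x)
  set d := dist x (h • x) with hd
  have htd' : t ≤ d := by linarith [ht0]
  have hgp : GromovProd x (h • h • x) (h • x) = GromovProd (h⁻¹ • x) (h • x) x := by
    have : x = h • (h⁻¹ • x) := (smul_inv_smul h x).symm
    calc GromovProd x (h • h • x) (h • x)
        = GromovProd (h • (h⁻¹ • x)) (h • (h • x)) (h • x) := by rw [← this]
      _ = GromovProd (h⁻¹ • x) (h • x) x := gp_smul hiso h _ _ _
  -- reversed geodesic from h•x to x
  have hr : IsGeodesicSegment (fun u => f (d - u)) (h • x) x := geo_reverse hf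
  -- translated geodesic from h•x to h•h•x
  have hhf : IsGeodesicSegment (fun u => h • f u) (h • x) (h • (h • x)) := by
    have := geo_smul hiso h hf
    simpa using this
  have hrr : IsGeodesicSegment (fun u => f (dist (h • x) x - u)) (h • x) x := by
    rw [dist_comm (h • x) x]; exact hr
  have hthin := hhyp.2 x (h • (h • x)) (h • x) (fun u => f (dist (h • x) x - u))
    (fun u => h • f u) hrr hhf t ⟨ht0, by rw [hgp]; exact htP⟩
  simp only [dist_comm (h • x) x] at hthin
  -- hthin : dist (f (d - t)) (h • f t) ≤ δ
  refine ⟨f t, ?_, ?_⟩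
  · exact (geo_mem_param hf ht0 htd').1
  · have h1 : dist (f t) (f (d - t)) = d - 2 * t := by
      rw [hf.2.2 t ⟨ht0, htd'⟩ (d - t) ⟨by linarith, by linarith⟩]
      rw [abs_of_nonpos (by linarith)]; ring
    calc dist (f t) (h • f t) ≤ dist (f t) (f (d - t)) + dist (f (d - t)) (h • f t) :=
          dist_triangle _ _ _
      _ ≤ (d - 2 * t) + δ := by rw [h1]; exact add_le_add_right hthin _
      _ = d - 2 * t + δ := by ring

/-- `d(y, h^k y) ≤ k d(y, h y)` for natural `k`. -/
lemma dist_pow_le (hiso : IsometricAction G S) (h : G) (y : S) (k : ℕ) :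
    dist y (h ^ k • y) ≤ (k : ℝ) * dist y (h • y) := by
  induction k with
  | zero => simp
  | succ k ih =>
    have : h ^ (k + 1) • y = h ^ k • (h • y) := by
      rw [pow_succ, mul_smul]
    rw [this]
    calc dist y (h ^ k • (h • y)) ≤ dist y (h ^ k • y) + dist (h ^ k • y) (h ^ k • (h • y)) :=
          dist_triangle _ _ _
      _ ≤ (k : ℝ) * dist y (h • y) + dist y (h • y) := by
          rw [dist_smul_eq hiso]; exact add_le_add_left ih _
      _ = ((k + 1 : ℕ) : ℝ) * dist y (h • y) := by push_cast; ring

/-- `d(y, h^r y) ≤ |r| d(y, h y)` for integer `r`. -/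
lemma dist_zpow_le (hiso : IsometricAction G S) (h : G) (y : S) (r : ℤ) :
    dist y (h ^ r • y) ≤ |(r : ℝ)| * dist y (h • y) := by
  rcases le_or_gt 0 r with hr | hr
  · lift r to ℕ using hr
    rw [zpow_natCast]
    simpa [abs_of_nonneg (by positivity : (0:ℝ) ≤ (r:ℝ))] using dist_pow_le hiso h y r
  · have : h ^ r • y = h ^ r • y := rfl
    have hrw : dist y (h ^ r • y) = dist (h ^ (-r) • y) y := by
      rw [← dist_smul_eq hiso (h ^ (-r)) y (h ^ r • y)]
      rw [smul_smul, ← zpow_add]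
      simp
    rw [hrw, dist_comm]
    have hrn : 0 ≤ -r := by linarith
    lift (-r) to ℕ using hrn with k hk
    rw [zpow_natCast]
    calc dist y (h ^ k • y) ≤ (k : ℝ) * dist y (h • y) := dist_pow_le hiso h y k
      _ = |(r : ℝ)| * dist y (h • y) := by
          congr 1
          have : (k : ℝ) = -(r : ℝ) := by
            have := congrArg (fun z : ℤ => (z : ℝ)) hk
            push_cast at this
            linarith
          rw [this, abs_of_neg (by exact_mod_cast hr)]

variable [Nonempty S]

lemma tl_le (hiso : IsometricAction G S) (h : G) (y : S) :
    translationLength S h ≤ dist y (h • y) := by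
  apply ciInf_le
  exact ⟨0, fun r ⟨z, hz⟩ => hz ▸ dist_nonneg⟩

lemma tl_nonneg (h : G) : 0 ≤ translationLength S h :=
  le_ciInf fun y => dist_nonneg

lemma tl_exists (h : G) {θ : ℝ} (hθ : 0 < θ) :
    ∃ y : S, dist y (h • y) < translationLength S h + θ := by
  have : translationLength S h < translationLength S h + θ := by linarith
  exact exists_lt_of_ciInf_lt this

/-- The key iteration: from any point of a quasi-axis one can move to a point with
small "turn" Gromov product without increasing displacement. -/
lemma find_good (hδ : 0 ≤ δ) (hhyp : DeltaHyperbolic δ S) (hiso : IsometricAction G S)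
    (h : G) (htl : 2 * δ + 2 ≤ translationLength S h) :
    ∀ k : ℕ, ∀ x : S, dist x (h • x) ≤ translationLength S h + k →
    ∃ w : S, GromovProd (h⁻¹ • w) (h • w) w ≤ δ + 1 ∧
      dist w (h • w) + dist x w ≤ dist x (h • x) := by
  intro k
  induction k with
  | zero =>
    intro x hx
    by_cases hP : GromovProd (h⁻¹ • x) (h • x) x ≤ δ + 1
    · exact ⟨x, hP, by simp⟩
    · push_neg at hP
      exfalso
      set d := dist x (h • x) with hd
      have hdtl : translationLength S h ≤ d := tl_le hiso h x
      have hd2 : 2 * δ + 2 ≤ d := le_trans htl hdtl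
      rcases le_or_gt (d / 2) (GromovProd (h⁻¹ • x) (h • x) x) with hc | hc
      · obtain ⟨x', _, hx'⟩ := disp_step hδ hhyp hiso h x (by linarith : (0:ℝ) ≤ d / 2) hc
          (by linarith)
        have := tl_le hiso h x'
        simp only [← hd] at hx'
        have : translationLength S h ≤ d - 2 * (d / 2) + δ := le_trans this hx'
        linarith
      · obtain ⟨x', _, hx'⟩ := disp_step hδ hhyp hiso h x
          (le_trans (by linarith) hP.le) (le_refl _) (by linarith)
        have h2 := tl_le hiso h x'
        have : translationLength S h ≤ d - 2 * GromovProd (h⁻¹ • x) (h • x) x + δ :=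
          le_trans h2 hx'
      -- d ≤ tl + 0, tl ≤ d - 2P + δ, P > δ+1 : tl ≤ d - δ - 2 ≤ tl - 2 absurd
        have hxle : d ≤ translationLength S h + 0 := by exact_mod_cast hx
        linarith
  | succ k ih =>
    intro x hx
    by_cases hP : GromovProd (h⁻¹ • x) (h • x) x ≤ δ + 1
    · exact ⟨x, hP, by simp⟩
    · push_neg at hP
      set d := dist x (h • x) with hd
      have hdtl : translationLength S h ≤ d := tl_le hiso h x
      have hd2 : 2 * δ + 2 ≤ d := le_trans htl hdtl
      rcases le_or_gt (d / 2) (GromovProd (h⁻¹ • x) (h • x) x) with hc | hc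
      · exfalso
        obtain ⟨x', _, hx'⟩ := disp_step hδ hhyp hiso h x (by linarith : (0:ℝ) ≤ d / 2) hc
          (by linarith)
        have := le_trans (tl_le hiso h x') hx'
        linarith
      · set P := GromovProd (h⁻¹ • x) (h • x) x with hPdef
        obtain ⟨x', hxx', hx'⟩ := disp_step hδ hhyp hiso h x
          (le_trans (by linarith) hP.le) (le_refl _) (by linarith)
        have hx'le : dist x' (h • x') ≤ translationLength S h + k := by
          have : d ≤ translationLength S h + (k + 1 : ℕ) := hx
          push_cast at this
          have : d - 2 * P + δ ≤ translationLength S h + k := by linarith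
          linarith [hx']
        obtain ⟨w, hw1, hw2⟩ := ih x' hx'le
        refine ⟨w, hw1, ?_⟩
        calc dist w (h • w) + dist x w
            ≤ dist w (h • w) + (dist x x' + dist x' w) := by
              linarith [dist_triangle x x' w]
          _ ≤ (dist x' (h • x') - dist x' w) + (dist x x' + dist x' w) := by linarith [hw2]
          _ ≤ (d - 2 * P + δ) + P := by rw [hxx']; linarith [hx']
          _ ≤ d := by linarith

end Disp

section Chain
variable {S : Type*} [MetricSpace S] {δ σ M : ℝ}

/-- Chain lemma, part (i): prefix Gromov products stay small. -/
lemma chain_i (hδ : 0 ≤ δ) (hhyp : DeltaHyperbolic δ S) (hσ : 0 ≤ σ)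
    (hM : 2 * σ + 3 * δ + 1 ≤ M) (x : ℕ → S) (l : ℕ)
    (hstep : ∀ j, j < l → M ≤ dist (x j) (x (j + 1)))
    (hturn : ∀ j, 0 < j → j + 1 ≤ l → GromovProd (x (j - 1)) (x (j + 1)) (x j) ≤ σ) :
    ∀ j, j < l → GromovProd (x 0) (x (j + 1)) (x j) ≤ σ + δ := by
  intro j
  induction j with
  | zero => intro _; rw [gp_self]; linarith
  | succ j ih =>
    intro hjl
    have hIH : GromovProd (x 0) (x (j + 1)) (x j) ≤ σ + δ := ih (by omega)
    have hturnj : GromovProd (x j) (x (j + 2)) (x (j + 1)) ≤ σ := by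
      have := hturn (j + 1) (by omega) (by omega)
      simpa using this
    have hid : GromovProd (x j) (x 0) (x (j + 1)) + GromovProd (x (j + 1)) (x 0) (x j)
        = dist (x j) (x (j + 1)) := gp_add _ _ _
    have hfirst : σ + 2 * δ + 1 ≤ GromovProd (x j) (x 0) (x (j + 1)) := by
      have hstepj : M ≤ dist (x j) (x (j + 1)) := hstep j (by omega)
      have hcm : GromovProd (x (j + 1)) (x 0) (x j) = GromovProd (x 0) (x (j + 1)) (x j) :=
        gp_comm _ _ _
      rw [hcm] at hid
      linarith
    have h4 := fourpt hδ hhyp (x (j + 1)) (x j) (x 0) (x (j + 2))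
    -- min (GP (x j) (x 0) _) (GP (x 0) (x (j+2)) _) - δ ≤ GP (x j) (x (j+2)) _ ≤ σ
    by_contra hcon
    push_neg at hcon
    have hmin : σ + δ < min (GromovProd (x j) (x 0) (x (j + 1)))
        (GromovProd (x 0) (x (j + 2)) (x (j + 1))) := by
      apply lt_min
      · linarith
      · have : x (j + 1 + 1) = x (j + 2) := by norm_num
        rw [this] at hcon
        linarith
    have : x (j + 1 + 1) = x (j + 2) := by norm_num
    linarith [hturnj, h4]

/-- Chain lemma, part (b): the chain makes linear progress. -/
lemma chain_b (hδ : 0 ≤ δ) (hhyp : DeltaHyperbolic δ S) (hσ : 0 ≤ σ)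
    (hM : 2 * σ + 3 * δ + 1 ≤ M) (x : ℕ → S) (l : ℕ)
    (hstep : ∀ j, j < l → M ≤ dist (x j) (x (j + 1)))
    (hturn : ∀ j, 0 < j → j + 1 ≤ l → GromovProd (x (j - 1)) (x (j + 1)) (x j) ≤ σ) :
    ∀ j, j ≤ l → (j : ℝ) * (M - 2 * σ - 2 * δ) ≤ dist (x 0) (x j) := by
  intro j
  induction j with
  | zero => intro _; simp
  | succ j ih =>
    intro hjl
    have hIH : (j : ℝ) * (M - 2 * σ - 2 * δ) ≤ dist (x 0) (x j) := ih (by omega)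
    have hgp : GromovProd (x 0) (x (j + 1)) (x j) ≤ σ + δ :=
      chain_i hδ hhyp hσ hM x l hstep hturn j (by omega)
    have hstepj : M ≤ dist (x j) (x (j + 1)) := hstep j (by omega)
    have hexp : dist (x 0) (x (j + 1)) =
        dist (x j) (x 0) + dist (x j) (x (j + 1)) - 2 * GromovProd (x 0) (x (j + 1)) (x j) := by
      unfold GromovProd; ring
    rw [hexp]
    rw [dist_comm (x j) (x 0)]
    push_cast
    nlinarith [hδ, hσ]

/-- Chain lemma, part (a): Gromov products of the endpoints at interior points are small. -/
lemma chain_a (hδ : 0 ≤ δ) (hhyp : DeltaHyperbolic δ S) (hσ : 0 ≤ σ)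
    (hM : 2 * σ + 3 * δ + 1 ≤ M) (x : ℕ → S) (l : ℕ)
    (hstep : ∀ j, j < l → M ≤ dist (x j) (x (j + 1)))
    (hturn : ∀ j, 0 < j → j + 1 ≤ l → GromovProd (x (j - 1)) (x (j + 1)) (x j) ≤ σ) :
    ∀ j, j ≤ l → GromovProd (x 0) (x l) (x j) ≤ σ + 2 * δ := by
  intro j hj
  rcases Nat.eq_zero_or_pos j with h0 | hjpos
  · subst h0; rw [gp_self]; linarith
  rcases eq_or_lt_of_le hj with hl | hjlt
  · subst hl
    rw [gp_comm]
    rw [gp_self]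
    linarith
  -- 0 < j < l: use reversed chain y i = x (l - i)
  set y : ℕ → S := fun i => x (l - i) with hy
  have hystep : ∀ i, i < l → M ≤ dist (y i) (y (i + 1)) := by
    intro i hi
    have he : l - i - 1 + 1 = l - i := by omega
    have h2 := hstep (l - i - 1) (by omega)
    rw [he] at h2
    have : y (i + 1) = x (l - i - 1) := by simp only [hy]; exact congrArg x (by omega)
    rw [this]
    simp only [hy]
    rw [dist_comm]
    exact h2
  have hyturn : ∀ i, 0 < i → i + 1 ≤ l → GromovProd (y (i - 1)) (y (i + 1)) (y i) ≤ σ := by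
    intro i hipos hil
    have e1 : y (i - 1) = x (l - i + 1) := by simp only [hy]; exact congrArg x (by omega)
    have e2 : y (i + 1) = x (l - i - 1) := by simp only [hy]; exact congrArg x (by omega)
    have e3 : y i = x (l - i) := rfl
    rw [e1, e2, e3, gp_comm]
    have h2 := hturn (l - i) (by omega) (by omega)
    have e4 : l - i - 1 = l - i - 1 := rfl
    have e5 : l - i + 1 = l - i + 1 := rfl
    convert h2 using 3 <;> omega
  -- apply chain_i to y at index l - j - 1 : gives (y 0, y (l-j))_{y (l-j-1)} ≤ σ + δ
  have hrev := chain_i hδ hhyp hσ hM y l hystep hyturn (l - j - 1) (by omega)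
  have e6 : y 0 = x l := by simp [hy]
  have e7 : (l - j - 1) + 1 = l - j := by omega
  have e8 : y (l - j - 1 + 1) = x j := by simp only [hy]; exact congrArg x (by omega)
  have e9 : y (l - j - 1) = x (j + 1) := by simp only [hy]; exact congrArg x (by omega)
  rw [e6, e8, e9] at hrev
  -- hrev : GromovProd (x l) (x j) (x (j+1)) ≤ σ + δ
  have hpre : GromovProd (x 0) (x (j + 1)) (x j) ≤ σ + δ :=
    chain_i hδ hhyp hσ hM x l hstep hturn j hjlt
  have hid : GromovProd (x j) (x l) (x (j + 1)) + GromovProd (x (j + 1)) (x l) (x j)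
      = dist (x j) (x (j + 1)) := gp_add _ _ _
  have hstepj : M ≤ dist (x j) (x (j + 1)) := hstep j hjlt
  have hsecond : σ + 2 * δ + 1 ≤ GromovProd (x l) (x (j + 1)) (x j) := by
    have hcm : GromovProd (x j) (x l) (x (j + 1)) = GromovProd (x l) (x j) (x (j + 1)) :=
      gp_comm _ _ _
    have hcm2 : GromovProd (x (j + 1)) (x l) (x j) = GromovProd (x l) (x (j + 1)) (x j) :=
      gp_comm _ _ _
    rw [hcm, hcm2] at hid
    linarith
  have h4 := fourpt hδ hhyp (x j) (x 0) (x l) (x (j + 1))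
  -- min (GP (x 0) (x l) (x j)) (GP (x l) (x (j+1)) (x j)) - δ ≤ GP (x 0) (x (j+1)) (x j)
  by_contra hcon
  push_neg at hcon
  have hmin : σ + 2 * δ < min (GromovProd (x 0) (x l) (x j)) (GromovProd (x l) (x (j + 1)) (x j)) := by
    apply lt_min
    · exact hcon
    · linarith
  linarith [hpre, h4, hmin]

end Chain

section Power
open Classical
variable {S G : Type*} [MetricSpace S] [Group G] [MulAction G S] {δ : ℝ} [Nonempty S]

/-- turn products along an orbit are constant. -/
lemma turn_orbit (hiso : IsometricAction G S) (h : G) (y : S) (j : ℤ) :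
    GromovProd (h ^ (j - 1) • y) (h ^ (j + 1) • y) (h ^ j • y)
      = GromovProd (h⁻¹ • y) (h • y) y := by
  have e1 : h ^ (j - 1) • y = h ^ j • (h⁻¹ • y) := by
    rw [smul_smul, ← zpow_sub_one]
  have e2 : h ^ (j + 1) • y = h ^ j • (h • y) := by
    rw [smul_smul, ← zpow_add_one]
  rw [e1, e2]
  have : h ^ j • y = h ^ j • y := rfl
  calc GromovProd (h ^ j • (h⁻¹ • y)) (h ^ j • (h • y)) (h ^ j • y)
      = GromovProd (h⁻¹ • y) (h • y) y := gp_smul hiso (h ^ j) _ _ _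

/-- Lower bound for displacement of powers: `d(y, h^c y) ≥ c ([h] - 3δ)` when `[h] ≥ 4δ+1`. -/
lemma disp_pow_lower (hδ : 0 ≤ δ) (hhyp : DeltaHyperbolic δ S) (hiso : IsometricAction G S)
    (h : G) (h4 : 4 * δ + 1 ≤ translationLength S h) (c : ℕ) (y : S) :
    (c : ℝ) * (translationLength S h - 3 * δ) ≤ dist y (h ^ (c : ℤ) • y) := by
  set tl := translationLength S h with htl
  set d := dist y (h • y) with hd
  set P := GromovProd (h⁻¹ • y) (h • y) y with hP
  have hdtl : tl ≤ d := tl_le hiso h y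
  -- step 1 : 2 * min P (d/2) ≤ d - tl + δ
  have hkey : 2 * min P (d / 2) ≤ d - tl + δ := by
    have ht0 : 0 ≤ min P (d / 2) := le_min (gp_nonneg _ _ _) (by positivity)
    obtain ⟨y', _, hy'⟩ := disp_step hδ hhyp hiso h y ht0 (min_le_left _ _)
      (by have := min_le_right P (d/2); linarith)
    have := tl_le hiso h y'
    simp only [← hd] at hy'
    have h2 : tl ≤ d - 2 * min P (d / 2) + δ := le_trans this hy'
    linarith
  have hPd : P < d / 2 := by
    rcases le_or_gt (d / 2) P with hc | hc
    · rw [min_eq_right hc] at hkey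
      exfalso; linarith
    · exact hc
  rw [min_eq_left hPd.le] at hkey
  -- chain j ↦ h^j • y with turn P and steps d
  set xc : ℕ → S := fun j => h ^ (j : ℤ) • y with hxc
  have hstep : ∀ j, j < c → d ≤ dist (xc j) (xc (j + 1)) := by
    intro j _
    have e : ((j + 1 : ℕ) : ℤ) = (j : ℤ) + 1 := by push_cast; ring
    have : xc (j + 1) = h ^ (j : ℤ) • (h • y) := by
      simp only [hxc, e, zpow_add_one, mul_smul]
    rw [this]
    simp only [hxc]
    rw [dist_smul_eq hiso]
  have hturn : ∀ j, 0 < j → j + 1 ≤ c →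
      GromovProd (xc (j - 1)) (xc (j + 1)) (xc j) ≤ (d - tl + δ) / 2 := by
    intro j hj _
    have e1 : ((j - 1 : ℕ) : ℤ) = (j : ℤ) - 1 := by omega
    have e2 : ((j + 1 : ℕ) : ℤ) = (j : ℤ) + 1 := by omega
    simp only [hxc, e1, e2]
    rw [turn_orbit hiso h y (j : ℤ)]
    linarith
  have hσ : 0 ≤ (d - tl + δ) / 2 := by linarith [gp_nonneg (h⁻¹ • y) (h • y) y]
  have hM : 2 * ((d - tl + δ) / 2) + 3 * δ + 1 ≤ d := by linarith
  have := chain_b hδ hhyp hσ hM xc c hstep hturn c (le_refl c)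
  have heq : xc 0 = y := by simp [hxc]
  rw [heq] at this
  calc (c : ℝ) * (tl - 3 * δ) ≤ (c : ℝ) * (d - 2 * ((d - tl + δ) / 2) - 2 * δ) := by
        have : d - 2 * ((d - tl + δ) / 2) - 2 * δ = tl - 3 * δ := by ring
        rw [this]
    _ ≤ dist y (xc c) := this
    _ = dist y (h ^ (c : ℤ) • y) := rfl

/-- `[h^c] ≥ c ([h] - 3δ)`. -/
lemma tl_pow_lower (hδ : 0 ≤ δ) (hhyp : DeltaHyperbolic δ S) (hiso : IsometricAction G S)
    (h : G) (h4 : 4 * δ + 1 ≤ translationLength S h) (c : ℕ) :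
    (c : ℝ) * (translationLength S h - 3 * δ) ≤ translationLength S (h ^ (c : ℤ)) :=
  le_ciInf fun y => disp_pow_lower hδ hhyp hiso h h4 c y

end Power

section Lox
variable {S G : Type*} [MetricSpace S] [Group G] [MulAction G S]

/-- Lower bound on translation length of powers of a loxodromic element. -/
lemma tl_zpow_lower (hiso : IsometricAction G S) (g : G) (s₀ : S) (κ e : ℝ)
    (hκ : 1 ≤ κ) (he : 0 ≤ e)
    (hlox : ∀ n m : ℤ, |(n : ℝ) - (m : ℝ)| / κ - e ≤ dist ((g ^ n) • s₀) ((g ^ m) • s₀))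
    (N : ℤ) : ∀ y : S, |(N : ℝ)| / κ ≤ dist y (g ^ N • y) := by
  intro y
  by_contra hcon
  push_neg at hcon
  set d := dist y (g ^ N • y) with hd
  set θ := |(N : ℝ)| / κ - d with hθ
  have hθpos : 0 < θ := by simp only [hθ]; linarith
  obtain ⟨k, hk⟩ := exists_nat_gt ((e + 2 * dist y s₀) / θ)
  -- d(y, g^{Nk} y) ≤ k d
  have h1 : dist y ((g ^ N) ^ (k : ℤ) • y) ≤ (k : ℝ) * d := by
    have := dist_pow_le hiso (g ^ N) y k
    rw [← zpow_natCast (g ^ N) k] at this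
    exact this
  have hNk : (g ^ N) ^ (k : ℤ) = g ^ (N * k) := by
    rw [← zpow_mul]
  -- lower bound via orbit of s₀
  have h2 : |((N * k : ℤ) : ℝ)| / κ - e ≤ dist (g ^ (N * (k : ℤ)) • s₀) s₀ := by
    have := hlox (N * k) 0
    simpa using this
  have h3 : dist (g ^ (N * (k : ℤ)) • s₀) s₀ ≤
      dist y (g ^ (N * (k : ℤ)) • y) + 2 * dist y s₀ := by
    have t1 : dist (g ^ (N * (k : ℤ)) • s₀) s₀ ≤
        dist (g ^ (N * (k : ℤ)) • s₀) (g ^ (N * (k : ℤ)) • y) +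
        dist (g ^ (N * (k : ℤ)) • y) y + dist y s₀ := by
      calc dist (g ^ (N * (k : ℤ)) • s₀) s₀
          ≤ dist (g ^ (N * (k : ℤ)) • s₀) (g ^ (N * (k : ℤ)) • y) + dist (g ^ (N * (k : ℤ)) • y) s₀ :=
            dist_triangle _ _ _
        _ ≤ _ := by linarith [dist_triangle (g ^ (N * (k : ℤ)) • y) y s₀]
    rw [dist_smul_eq hiso] at t1
    rw [dist_comm s₀ y] at t1
    rw [dist_comm (g ^ (N * (k : ℤ)) • y) y] at t1
    linarith
  rw [hNk] at h1
  have habs : |((N * k : ℤ) : ℝ)| = |(N : ℝ)| * k := by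
    push_cast
    rw [abs_mul]
    congr 1
    exact abs_of_nonneg (by positivity)
  rw [habs] at h2
  -- combine: |N| k / κ - e - 2 d(y,s₀) ≤ k d
  have hκpos : 0 < κ := by linarith
  have hcomb : |(N : ℝ)| * k / κ - e - 2 * dist y s₀ ≤ (k : ℝ) * d := by
    have := le_trans h2 h3
    linarith
  have hdiv : (k : ℝ) * (|(N : ℝ)| / κ) - (e + 2 * dist y s₀) ≤ (k : ℝ) * d := by
    have : |(N : ℝ)| * k / κ = (k : ℝ) * (|(N : ℝ)| / κ) := by ring
    rw [this] at hcomb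
    linarith
  -- contradiction
  have hk2 : e + 2 * dist y s₀ < (k : ℝ) * θ := (div_lt_iff₀ hθpos).mp hk
  have hexpand : (k : ℝ) * θ = (k : ℝ) * (|(N : ℝ)| / κ) - (k : ℝ) * d := by
    simp only [hθ]; ring
  rw [hexpand] at hk2
  linarith

lemma tl_zpow_lower' [Nonempty S] (hiso : IsometricAction G S) (g : G) (s₀ : S) (κ e : ℝ)
    (hκ : 1 ≤ κ) (he : 0 ≤ e)
    (hlox : ∀ n m : ℤ, |(n : ℝ) - (m : ℝ)| / κ - e ≤ dist ((g ^ n) • s₀) ((g ^ m) • s₀))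
    (N : ℤ) : |(N : ℝ)| / κ ≤ translationLength S (g ^ N) :=
  le_ciInf fun y => tl_zpow_lower hiso g s₀ κ e hκ he hlox N y

end Lox

section NearChain
open Classical
variable {S : Type*} [MetricSpace S] {δ σ M S₁ : ℝ}

/-- Every point of a geodesic between the endpoints of a chain is close to the chain. -/
lemma geod_near_chain (hδ : 0 ≤ δ) (hhyp : DeltaHyperbolic δ S) (hσ : 0 ≤ σ)
    (hM : 2 * σ + 3 * δ + 1 ≤ M) (x : ℕ → S) (l : ℕ)
    (hstep : ∀ j, j < l → M ≤ dist (x j) (x (j + 1)))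
    (hstep' : ∀ j, j < l → dist (x j) (x (j + 1)) ≤ S₁)
    (hturn : ∀ j, 0 < j → j + 1 ≤ l → GromovProd (x (j - 1)) (x (j + 1)) (x j) ≤ σ)
    (hS₁0 : 0 ≤ S₁)
    {γ : ℝ → S} (hγ : IsGeodesicSegment γ (x 0) (x l))
    {t : ℝ} (ht : t ∈ Set.Icc (0:ℝ) (dist (x 0) (x l))) :
    ∃ j ≤ l, dist (γ t) (x j) ≤ S₁ + σ + 3 * δ := by
  set u : ℕ → ℝ := fun j => GromovProd (x j) (x l) (x 0) with hu
  have hu0 : u 0 = 0 := gp_self _ _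
  have hul : u l = dist (x 0) (x l) := gp_self' _ _
  set P : ℕ → Prop := fun j => u j ≤ t with hPdef
  have hP0 : P 0 := by simp only [hPdef, hu0]; exact ht.1
  set j₀ := Nat.findGreatest P l with hj₀
  have hPj₀ : P j₀ := Nat.findGreatest_spec (Nat.zero_le l) hP0
  have hj₀l : j₀ ≤ l := Nat.findGreatest_le l
  have hnear : |t - u j₀| ≤ S₁ := by
    rcases eq_or_lt_of_le hj₀l with heq | hlt
    · -- j₀ = l
      have hue : u j₀ = dist (x 0) (x l) := by rw [heq, hul]
      simp only [hPdef] at hPj₀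
      rw [abs_le]
      constructor
      · linarith
      · linarith [ht.2]
    · have hnot : ¬ P (j₀ + 1) :=
        Nat.findGreatest_is_greatest (n := l) (k := j₀ + 1) (by omega) (by omega)
      simp only [hPdef] at hPj₀ hnot
      push_neg at hnot
      have hlip : u (j₀ + 1) ≤ u j₀ + dist (x j₀) (x (j₀ + 1)) := by
        simp only [hu]
        have := gp_lip (x (j₀ + 1)) (x j₀) (x l) (x 0)
        rw [dist_comm (x (j₀ + 1)) (x j₀)] at this
        exact this
      have := hstep' j₀ hlt
      rw [abs_le]
      constructor <;> linarith
  have hgpj : GromovProd (x 0) (x l) (x j₀) ≤ σ + 2 * δ :=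
    chain_a hδ hhyp hσ hM x l hstep hturn j₀ hj₀l
  have hn := near_geod hδ hhyp hγ (x j₀)
  -- parameter of near_geod is GromovProd (x j₀) (x l) (x 0) = u j₀
  have huj : u j₀ ∈ Set.Icc (0:ℝ) (dist (x 0) (x l)) := by
    constructor
    · simp only [hu]; exact gp_nonneg _ _ _
    · simp only [hu]; exact gp_le_right _ _ _
  have hdist : dist (γ t) (γ (u j₀)) = |t - u j₀| := hγ.2.2 t ht (u j₀) huj
  refine ⟨j₀, hj₀l, ?_⟩
  calc dist (γ t) (x j₀) ≤ dist (γ t) (γ (u j₀)) + dist (γ (u j₀)) (x j₀) := dist_triangle _ _ _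
    _ ≤ |t - u j₀| + (GromovProd (x 0) (x l) (x j₀) + δ) := by
        rw [hdist]
        gcongr
        rw [dist_comm]
        exact hn
    _ ≤ S₁ + (σ + 2 * δ + δ) := by gcongr <;> linarith
    _ = S₁ + σ + 3 * δ := by ring

end NearChain

section Par
variable {S : Type*} [MetricSpace S] {δ σ M S₁ : ℝ}

/-- Two bi-infinite chains at finite Hausdorff distance are uniformly close. -/
lemma parallel_chains (hδ : 0 ≤ δ) (hhyp : DeltaHyperbolic δ S) (hσ : 0 ≤ σ)
    (hM : 2 * σ + 3 * δ + 1 ≤ M) (hS₁ : 0 ≤ S₁)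
    (Λ W : ℤ → S)
    (hΛstepl : ∀ i, M ≤ dist (Λ i) (Λ (i + 1)))
    (hΛstepu : ∀ i, dist (Λ i) (Λ (i + 1)) ≤ S₁)
    (hΛturn : ∀ i, GromovProd (Λ (i - 1)) (Λ (i + 1)) (Λ i) ≤ σ)
    (hWstep : ∀ i, M ≤ dist (W i) (W (i + 1)))
    (hWturn : ∀ i, GromovProd (W (i - 1)) (W (i + 1)) (W i) ≤ σ)
    (B : ℝ) (hB : ∀ i, Metric.infDist (W i) (Set.range Λ) ≤ B) :
    Metric.infDist (W 0) (Set.range Λ) ≤ S₁ + 2 * σ + 8 * δ + 1 := by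
  classical
  have hΛne : (Set.range Λ).Nonempty := Set.range_nonempty Λ
  set f : ℤ → ℝ := fun i => Metric.infDist (W i) (Set.range Λ) with hf
  have hbdd : BddAbove (Set.range f) := by
    refine ⟨B, ?_⟩
    rintro r ⟨i, rfl⟩
    exact hB i
  set s := ⨆ i, f i with hs
  have hf0 : f 0 ≤ s := le_ciSup hbdd 0
  have hfle : ∀ i, f i ≤ s := fun i => le_ciSup hbdd i
  have hs0 : 0 ≤ s := le_trans Metric.infDist_nonneg hf0
  -- it suffices to show s ≤ S₁ + 2σ + 8δ + 1
  suffices hsle : s ≤ S₁ + 2 * σ + 8 * δ + 1 by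
    exact le_trans hf0 hsle
  have hlt : s - 1 < ⨆ i, f i := by rw [← hs]; linarith
  obtain ⟨j₀, hj₀⟩ := exists_lt_of_lt_ciSup hlt
  -- choose k
  set M' := M - 2 * σ - 2 * δ with hM'
  have hM'1 : 1 + δ ≤ M' := by simp only [hM']; linarith
  set k : ℕ := ⌈s + S₁ + 10 * (σ + δ + 1)⌉₊ with hk
  have hkR : s + S₁ + 10 * (σ + δ + 1) ≤ (k : ℝ) := Nat.le_ceil _
  have hkM' : s + S₁ + 10 * (σ + δ + 1) ≤ (k : ℝ) * M' := by
    calc s + S₁ + 10 * (σ + δ + 1) ≤ (k : ℝ) := hkR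
      _ = (k : ℝ) * 1 := by ring
      _ ≤ (k : ℝ) * M' := by
          apply mul_le_mul_of_nonneg_left (by linarith) (by positivity)
  set w := W j₀ with hw
  set qm := W (j₀ - k) with hqm
  set qp := W (j₀ + k) with hqp
  -- chain facts on the window [j₀ - k, j₀ + k]
  have hwin : GromovProd qm qp w ≤ σ + 2 * δ ∧ (k : ℝ) * M' ≤ dist qm w ∧
      (k : ℝ) * M' ≤ dist w qp := by
    set xs : ℕ → S := fun i => W (j₀ - k + i) with hxs
    have hxstep : ∀ i, i < 2 * k → M ≤ dist (xs i) (xs (i + 1)) := by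
      intro i _
      have e : xs (i + 1) = W (j₀ - k + i + 1) := by
        simp only [hxs]; exact congrArg W (by push_cast; ring)
      rw [e]
      exact hWstep (j₀ - k + i)
    have hxturn : ∀ i, 0 < i → i + 1 ≤ 2 * k →
        GromovProd (xs (i - 1)) (xs (i + 1)) (xs i) ≤ σ := by
      intro i hi _
      have e1 : xs (i - 1) = W ((j₀ - k + i) - 1) := by
        simp only [hxs]; exact congrArg W (by omega)
      have e2 : xs (i + 1) = W ((j₀ - k + i) + 1) := by
        simp only [hxs]; exact congrArg W (by push_cast; ring)
      rw [e1, e2]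
      exact hWturn (j₀ - k + i)
    have e0 : xs 0 = qm := by simp only [hxs, hqm]; exact congrArg W (by push_cast; ring)
    have ek : xs k = w := by simp only [hxs, hw]; exact congrArg W (by push_cast; ring)
    have e2k : xs (2 * k) = qp := by simp only [hxs, hqp]; exact congrArg W (by push_cast; ring)
    refine ⟨?_, ?_, ?_⟩
    · have := chain_a hδ hhyp hσ hM xs (2 * k) hxstep hxturn k (by omega)
      rwa [e0, ek, e2k] at this
    · have := chain_b hδ hhyp hσ hM xs (2 * k) hxstep hxturn k (by omega)
      rw [e0, ek] at this
      calc (k : ℝ) * M' = (k : ℝ) * (M - 2 * σ - 2 * δ) := by rw [hM']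
        _ ≤ dist qm w := this
    · -- shifted chain starting at j₀
      set ys : ℕ → S := fun i => W (j₀ + i) with hys
      have hystep : ∀ i, i < k → M ≤ dist (ys i) (ys (i + 1)) := by
        intro i _
        have e : ys (i + 1) = W (j₀ + i + 1) := by
          simp only [hys]; exact congrArg W (by push_cast; ring)
        rw [e]
        exact hWstep (j₀ + i)
      have hyturn : ∀ i, 0 < i → i + 1 ≤ k →
          GromovProd (ys (i - 1)) (ys (i + 1)) (ys i) ≤ σ := by
        intro i hi _
        have e1 : ys (i - 1) = W ((j₀ + i) - 1) := by
          simp only [hys]; exact congrArg W (by omega)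
        have e2 : ys (i + 1) = W ((j₀ + i) + 1) := by
          simp only [hys]; exact congrArg W (by push_cast; ring)
        rw [e1, e2]
        exact hWturn (j₀ + i)
      have ey0 : ys 0 = w := by simp only [hys, hw]; exact congrArg W (by push_cast; ring)
      have eyk : ys k = qp := by simp only [hys, hqp]
      have := chain_b hδ hhyp hσ hM ys k hystep hyturn k (le_refl k)
      rw [ey0, eyk] at this
      calc (k : ℝ) * M' = (k : ℝ) * (M - 2 * σ - 2 * δ) := by rw [hM']
        _ ≤ dist w qp := this
  obtain ⟨hmid, hdm, hdp⟩ := hwin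
  -- geodesic from qm to qp and the close point
  obtain ⟨γ, hγ⟩ := hhyp.1 qm qp
  set t₀ := GromovProd w qp qm with ht₀
  have hzcl : dist w (γ t₀) ≤ σ + 3 * δ := by
    have := near_geod hδ hhyp hγ w
    calc dist w (γ t₀) ≤ GromovProd qm qp w + δ := this
      _ ≤ σ + 3 * δ := by linarith
  have ht₀mem : t₀ ∈ Set.Icc (0:ℝ) (dist qm qp) := ⟨gp_nonneg _ _ _, gp_le_right _ _ _⟩
  -- t₀ and dist qm qp - t₀ are both large
  have hid1 : t₀ + GromovProd qm qp w = dist w qm := gp_add w qp qm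
  have ht₀big : (k : ℝ) * M' - (σ + 2 * δ) ≤ t₀ := by
    rw [dist_comm w qm] at hid1
    linarith
  have hid2 : GromovProd w qm qp + GromovProd qp qm w = dist w qp := gp_add w qm qp
  have hgpc : GromovProd qp qm w = GromovProd qm qp w := gp_comm _ _ _
  have hid3 : t₀ + GromovProd w qm qp = dist qm qp := by
    simp only [ht₀]
    unfold GromovProd
    rw [dist_comm qm w, dist_comm qp w, dist_comm qm qp]
    ring
  have htailbig : (k : ℝ) * M' - (σ + 2 * δ) ≤ dist qm qp - t₀ := by
    rw [hgpc] at hid2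
    have : GromovProd w qm qp = dist w qp - GromovProd qm qp w := by linarith
    have h2 : dist qm qp - t₀ = dist w qp - GromovProd qm qp w := by linarith [hid3]
    rw [h2]
    linarith
  -- points of Λ near qm, qp
  have hqm_s : Metric.infDist qm (Set.range Λ) ≤ s := hfle (j₀ - k)
  have hqp_s : Metric.infDist qp (Set.range Λ) ≤ s := hfle (j₀ + k)
  obtain ⟨pm, hpmmem, hpmd⟩ := (Metric.infDist_lt_iff hΛne).mp
    (lt_of_le_of_lt hqm_s (by linarith : s < s + 1))
  obtain ⟨pp, hppmem, hppd⟩ := (Metric.infDist_lt_iff hΛne).mp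
    (lt_of_le_of_lt hqp_s (by linarith : s < s + 1))
  -- first triangle: (qm, qp, pp)
  obtain ⟨γ₁, hγ₁⟩ := hhyp.1 qm pp
  obtain ⟨γ₂, hγ₂⟩ := hhyp.1 pp qp
  have hz_qp : dist (γ t₀) qp = dist qm qp - t₀ := (geo_mem_param hγ ht₀mem.1 ht₀mem.2).2
  have hz_qm : dist qm (γ t₀) = t₀ := (geo_mem_param hγ ht₀mem.1 ht₀mem.2).1
  rcases tri_thin hδ hhyp hγ hγ₁ hγ₂ ht₀mem with ⟨t₁, ht₁mem, ht₁d⟩ | ⟨t', ht'mem, ht'd⟩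
  swap
  · -- contradiction case: close to side pp-qp
    exfalso
    have h1 : dist (γ₂ t') qp = dist pp qp - t' := (geo_mem_param hγ₂ ht'mem.1 ht'mem.2).2
    have h2 : dist (γ t₀) qp ≤ dist (γ t₀) (γ₂ t') + dist (γ₂ t') qp := dist_triangle _ _ _
    have h3 : dist pp qp ≤ s + 1 := by rw [dist_comm]; linarith
    rw [hz_qp] at h2
    have : dist qm qp - t₀ ≤ δ + (s + 1) := by linarith [ht'mem.1]
    linarith [htailbig, hkM']
  -- second triangle: (qm, pp, pm)
  obtain ⟨γ₄, hγ₄⟩ := hhyp.1 qm pm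
  obtain ⟨γ₅, hγ₅⟩ := hhyp.1 pm pp
  rcases tri_thin hδ hhyp hγ₁ hγ₄ hγ₅ ht₁mem with ⟨t₄, ht₄mem, ht₄d⟩ | ⟨t₅, ht₅mem, ht₅d⟩
  · -- contradiction case: close to side qm-pm
    exfalso
    have h1 : dist qm (γ₄ t₄) = t₄ := (geo_mem_param hγ₄ ht₄mem.1 ht₄mem.2).1
    have h4 : dist qm (γ₁ t₁) = t₁ := (geo_mem_param hγ₁ ht₁mem.1 ht₁mem.2).1
    -- dist qm (γ₁ t₁) ≥ dist qm (γ t₀) - δ = t₀ - δ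
    have h5 : t₀ - δ ≤ t₁ := by
      have htr := dist_triangle qm (γ₁ t₁) (γ t₀)
      rw [hz_qm, h4, dist_comm (γ₁ t₁) (γ t₀)] at htr
      linarith [ht₁d]
    have h6 : t₄ ≤ dist qm pm := ht₄mem.2
    have h7 : t₁ ≤ t₄ + δ := by
      have := dist_triangle qm (γ₄ t₄) (γ₁ t₁)
      rw [h1] at this
      rw [dist_comm (γ₄ t₄) (γ₁ t₁)] at this
      linarith [h4, ht₄d]
    have h8 : dist qm pm ≤ s + 1 := hpmd.le
    linarith [ht₀big, hkM']
  -- main case: v = γ₅ t₅ on [pm, pp], near the Λ-chain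
  obtain ⟨im, him⟩ := hpmmem
  obtain ⟨ip, hip⟩ := hppmem
  -- subchain of Λ from im to ip
  have hvnear : ∃ q ∈ Set.range Λ, dist (γ₅ t₅) q ≤ S₁ + σ + 3 * δ := by
    rcases le_or_gt im ip with hle | hlt
    · set ch : ℕ → S := fun r => Λ (im + r) with hch
      set l : ℕ := (ip - im).toNat with hl
      have hchstep : ∀ r, r < l → M ≤ dist (ch r) (ch (r + 1)) := by
        intro r _
        have e : ch (r + 1) = Λ (im + r + 1) := by
          simp only [hch]; exact congrArg Λ (by push_cast; ring)
        rw [e]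
        exact hΛstepl (im + r)
      have hchstep' : ∀ r, r < l → dist (ch r) (ch (r + 1)) ≤ S₁ := by
        intro r _
        have e : ch (r + 1) = Λ (im + r + 1) := by
          simp only [hch]; exact congrArg Λ (by push_cast; ring)
        rw [e]
        exact hΛstepu (im + r)
      have hchturn : ∀ r, 0 < r → r + 1 ≤ l →
          GromovProd (ch (r - 1)) (ch (r + 1)) (ch r) ≤ σ := by
        intro r hr _
        have e1 : ch (r - 1) = Λ ((im + r) - 1) := by
          simp only [hch]; exact congrArg Λ (by omega)
        have e2 : ch (r + 1) = Λ ((im + r) + 1) := by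
          simp only [hch]; exact congrArg Λ (by push_cast; ring)
        rw [e1, e2]
        exact hΛturn (im + r)
      have ech0 : ch 0 = pm := by
        have : ch 0 = Λ im := by simp only [hch]; exact congrArg Λ (by push_cast; ring)
        rw [this, him]
      have echl : ch l = pp := by
        have : ch l = Λ ip := by simp only [hch, hl]; exact congrArg Λ (by omega)
        rw [this, hip]
      have hγ₅' : IsGeodesicSegment γ₅ (ch 0) (ch l) := by rw [ech0, echl]; exact hγ₅
      have ht₅mem' : t₅ ∈ Set.Icc (0:ℝ) (dist (ch 0) (ch l)) := by rw [ech0, echl]; exact ht₅mem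
      obtain ⟨r, hrl, hrd⟩ := geod_near_chain hδ hhyp hσ hM ch l hchstep hchstep' hchturn hS₁ hγ₅' ht₅mem'
      exact ⟨ch r, ⟨im + r, rfl⟩, hrd⟩
    · set ch : ℕ → S := fun r => Λ (im - r) with hch
      set l : ℕ := (im - ip).toNat with hl
      have hchstep : ∀ r, r < l → M ≤ dist (ch r) (ch (r + 1)) := by
        intro r _
        have e1 : ch r = Λ ((im - r - 1) + 1) := by
          simp only [hch]; exact congrArg Λ (by omega)
        have e2 : ch (r + 1) = Λ (im - r - 1) := by
          simp only [hch]; exact congrArg Λ (by omega)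
        rw [e1, e2, dist_comm]
        exact hΛstepl (im - r - 1)
      have hchstep' : ∀ r, r < l → dist (ch r) (ch (r + 1)) ≤ S₁ := by
        intro r _
        have e1 : ch r = Λ ((im - r - 1) + 1) := by
          simp only [hch]; exact congrArg Λ (by omega)
        have e2 : ch (r + 1) = Λ (im - r - 1) := by
          simp only [hch]; exact congrArg Λ (by omega)
        rw [e1, e2, dist_comm]
        exact hΛstepu (im - r - 1)
      have hchturn : ∀ r, 0 < r → r + 1 ≤ l →
          GromovProd (ch (r - 1)) (ch (r + 1)) (ch r) ≤ σ := by
        intro r hr _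
        have e1 : ch (r - 1) = Λ ((im - r) + 1) := by
          simp only [hch]; exact congrArg Λ (by omega)
        have e2 : ch (r + 1) = Λ ((im - r) - 1) := by
          simp only [hch]; exact congrArg Λ (by omega)
        have e3 : ch r = Λ (im - r) := rfl
        rw [e1, e2, e3, gp_comm]
        exact hΛturn (im - r)
      have ech0 : ch 0 = pm := by
        have : ch 0 = Λ im := by simp only [hch]; exact congrArg Λ (by push_cast; ring)
        rw [this, him]
      have echl : ch l = pp := by
        have : ch l = Λ ip := by simp only [hch, hl]; exact congrArg Λ (by omega)
        rw [this, hip]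
      have hγ₅' : IsGeodesicSegment γ₅ (ch 0) (ch l) := by rw [ech0, echl]; exact hγ₅
      have ht₅mem' : t₅ ∈ Set.Icc (0:ℝ) (dist (ch 0) (ch l)) := by rw [ech0, echl]; exact ht₅mem
      obtain ⟨r, hrl, hrd⟩ := geod_near_chain hδ hhyp hσ hM ch l hchstep hchstep' hchturn hS₁ hγ₅' ht₅mem'
      exact ⟨ch r, ⟨im - r, rfl⟩, hrd⟩
  obtain ⟨q, hqmem, hqd⟩ := hvnear
  -- conclude
  have hfj : f j₀ ≤ S₁ + 2 * σ + 8 * δ := by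
    have h1 : dist w q ≤ dist w (γ t₀) + dist (γ t₀) (γ₁ t₁) + dist (γ₁ t₁) (γ₅ t₅)
        + dist (γ₅ t₅) q := by
      have a1 := dist_triangle w (γ t₀) (γ₁ t₁)
      have a2 := dist_triangle w (γ₁ t₁) (γ₅ t₅)
      have a3 := dist_triangle w (γ₅ t₅) q
      linarith
    have : dist w q ≤ (σ + 3 * δ) + δ + δ + (S₁ + σ + 3 * δ) := by
      linarith [hzcl, ht₁d, ht₅d, h1]
    calc f j₀ ≤ dist w q := Metric.infDist_le_dist_of_mem hqmem
      _ ≤ S₁ + 2 * σ + 8 * δ := by linarith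
  linarith [hj₀, hfj]

end Par

section Final
variable {S G : Type*} [MetricSpace S] [Group G] [MulAction G S]

lemma orbit_step (hiso : IsometricAction G S) (h : G) (w : S) (j : ℤ) :
    dist (h ^ j • w) (h ^ (j + 1) • w) = dist w (h • w) := by
  have e : h ^ (j + 1) • w = h ^ j • (h • w) := by rw [zpow_add_one, mul_smul]
  rw [e, dist_smul_eq hiso]

lemma axis_zpow_inv (hiso : IsometricAction G S) (g : G) (p r : ℤ) (ε : ℝ) (y : S)
    (hy : y ∈ epsAxis S ε (g ^ p)) : g ^ r • y ∈ epsAxis S ε (g ^ p) := by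
  simp only [epsAxis, Set.mem_setOf_eq] at hy ⊢
  have e : g ^ p • g ^ r • y = g ^ r • (g ^ p • y) := by
    rw [smul_smul, smul_smul, ← zpow_add, ← zpow_add, add_comm]
  rw [e, dist_smul_eq hiso]
  exact hy

set_option maxHeartbeats 2000000 in
theorem epsAxis_hausdorffDist_bound' {S G : Type*} [MetricSpace S] [Group G] [MulAction G S]
    (δ : ℝ) (hδ : 0 ≤ δ) (hhyp : DeltaHyperbolic δ S) (hiso : IsometricAction G S)
    (ε : ℝ) (hε : 0 ≤ ε)
    (g : G) (hg : ∃ s : S, ∃ κ e : ℝ, 1 ≤ κ ∧ 0 ≤ e ∧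
      ∀ n m : ℤ, |(n : ℝ) - (m : ℝ)| / κ - e ≤ dist ((g ^ n) • s) ((g ^ m) • s)) :
    ∃ ν : ℝ, 0 < ν ∧ ∀ n m : ℤ, n ≠ 0 → m ≠ 0 →
      Metric.hausdorffDist (epsAxis S ε (g ^ n)) (epsAxis S ε (g ^ m)) ≤ ν := by
  classical
  obtain ⟨s₀, κ, e, hκ, he, hlox⟩ := hg
  haveI : Nonempty S := ⟨s₀⟩
  have hκ0 : (0:ℝ) < κ := by linarith
  -- global constants
  set σ' : ℝ := δ + 1 with hσ'
  set T₀ : ℝ := 9 * δ + ε + 20 with hT₀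
  have hT₀pos : 0 < T₀ := by simp only [hT₀]; linarith
  obtain ⟨c₀, hc₀R'⟩ := exists_nat_gt (κ * T₀)
  have hc₀R : κ * T₀ ≤ (c₀ : ℝ) := hc₀R'.le
  have hc₀pos : 0 < c₀ := by
    by_contra hcon
    push_neg at hcon
    interval_cases c₀
    · simp at hc₀R'
      nlinarith [hκ0, hT₀pos]
  set H₀ : G := g ^ (c₀ : ℤ) with hH₀
  have htlH₀ : T₀ ≤ translationLength S H₀ := by
    have h1 := tl_zpow_lower' hiso g s₀ κ e hκ he hlox (c₀ : ℤ)
    have h2 : T₀ ≤ |((c₀ : ℤ) : ℝ)| / κ := by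
      rw [le_div_iff₀ hκ0]
      have : |((c₀ : ℤ) : ℝ)| = (c₀ : ℝ) := by
        rw [abs_of_nonneg (by positivity)]
        norm_num
      rw [this]
      linarith [hc₀R]
    exact le_trans h2 h1
  -- reference good point w₀
  obtain ⟨x₀, hx₀⟩ := tl_exists (S := S) H₀ (by norm_num : (0:ℝ) < 1)
  obtain ⟨w₀, hw₀turn, hw₀sum⟩ := find_good hδ hhyp hiso H₀
    (by linarith : 2 * δ + 2 ≤ translationLength S H₀) 1 x₀
    (by push_cast; linarith [hx₀])
  set S₁ : ℝ := dist w₀ (H₀ • w₀) with hS₁def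
  have hS₁ge : T₀ ≤ S₁ := le_trans htlH₀ (tl_le hiso H₀ w₀)
  have hS₁0 : 0 ≤ S₁ := dist_nonneg
  set Λ : ℤ → S := fun i => H₀ ^ i • w₀ with hΛ
  have hΛstepeq : ∀ i : ℤ, dist (Λ i) (Λ (i + 1)) = S₁ := by
    intro i
    simp only [hΛ, hS₁def]
    exact orbit_step hiso H₀ w₀ i
  have hΛstepl : ∀ i : ℤ, T₀ ≤ dist (Λ i) (Λ (i + 1)) := fun i => by rw [hΛstepeq]; exact hS₁ge
  have hΛstepu : ∀ i : ℤ, dist (Λ i) (Λ (i + 1)) ≤ S₁ := fun i => le_of_eq (hΛstepeq i)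
  have hΛturn : ∀ i : ℤ, GromovProd (Λ (i - 1)) (Λ (i + 1)) (Λ i) ≤ σ' := by
    intro i
    simp only [hΛ]
    rw [turn_orbit hiso H₀ w₀ i]
    exact hw₀turn
  have hMcond : 2 * σ' + 3 * δ + 1 ≤ T₀ := by simp only [hσ', hT₀]; linarith
  have hσ'0 : 0 ≤ σ' := by simp only [hσ']; linarith
  -- uniform constants
  set E₀ : ℝ := (c₀ : ℝ) * (5 * δ + 2 + ε) + (c₀ : ℝ) * (T₀ + 1) * (3 * δ + ε) with hE₀
  have hE₀0 : 0 ≤ E₀ := by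
    have h1 : (0:ℝ) ≤ (c₀ : ℝ) := by positivity
    have h2 : (0:ℝ) ≤ (c₀ : ℝ) * (5 * δ + 2 + ε) := by
      apply mul_nonneg h1; linarith
    have h3 : (0:ℝ) ≤ (c₀ : ℝ) * (T₀ + 1) * (3 * δ + ε) := by
      apply mul_nonneg (mul_nonneg h1 (by linarith)); linarith
    simp only [hE₀]
    linarith
  set Cb : ℝ := S₁ + 2 * σ' + 8 * δ + 1 with hCb
  set C : ℝ := E₀ + Cb + 1 with hC
  have hCpos : 0 < C := by
    simp only [hC, hCb, hσ']
    nlinarith [hE₀0, hS₁0, hδ]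
  -- main approximation: every point of an ε-axis is C-close to Λ
  have main_near : ∀ p : ℤ, p ≠ 0 → ∀ x ∈ epsAxis S ε (g ^ p), ∃ i : ℤ, dist x (Λ i) ≤ C := by
    intro p hp x hx
    simp only [epsAxis, Set.mem_setOf_eq] at hx
    set tp := translationLength S (g ^ p) with htp
    have htp0 : 0 ≤ tp := tl_nonneg _
    -- choose the power a and establish the two key facts
    have key : ∃ a : ℕ, 0 < a ∧ T₀ ≤ translationLength S (g ^ (p * a)) ∧
        dist x (g ^ (p * (a : ℤ)) • x) ≤ translationLength S (g ^ (p * a)) + E₀ := by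
      rcases lt_or_ge tp (5 * δ + 2) with hbad | hgood
      · refine ⟨c₀, hc₀pos, ?_, ?_⟩
        · have h1 := tl_zpow_lower' hiso g s₀ κ e hκ he hlox (p * c₀)
          have h2 : T₀ ≤ |((p * c₀ : ℤ) : ℝ)| / κ := by
            rw [le_div_iff₀ hκ0]
            have habs : |((p * c₀ : ℤ) : ℝ)| = |(p : ℝ)| * (c₀ : ℝ) := by
              push_cast
              rw [abs_mul, abs_of_nonneg (by positivity : (0:ℝ) ≤ (c₀:ℝ))]
            rw [habs]
            have hp1 : (1:ℝ) ≤ |(p : ℝ)| := by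
              have : (1:ℤ) ≤ |p| := by
                rcases lt_or_gt_of_ne hp with h | h
                · rw [abs_of_neg h]; omega
                · rw [abs_of_pos h]; omega
              calc (1:ℝ) ≤ |p| := by exact_mod_cast this
                _ = |(p : ℝ)| := by push_cast; ring
            nlinarith [hc₀R, hT₀pos, hκ0]
          exact le_trans h2 h1
        · have hdle : dist x ((g ^ p) ^ (c₀ : ℤ) • x) ≤ (c₀ : ℝ) * dist x (g ^ p • x) := by
            have := dist_pow_le hiso (g ^ p) x c₀
            rwa [← zpow_natCast (g ^ p) c₀] at this
          rw [← zpow_mul] at hdle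
          have h3 : dist x (g ^ (p * (c₀:ℤ)) • x) ≤ (c₀ : ℝ) * (5 * δ + 2 + ε) := by
            calc dist x (g ^ (p * (c₀:ℤ)) • x) ≤ (c₀ : ℝ) * dist x (g ^ p • x) := hdle
              _ ≤ (c₀ : ℝ) * (tp + ε) := by
                  apply mul_le_mul_of_nonneg_left _ (by positivity)
                  exact hx
              _ ≤ (c₀ : ℝ) * (5 * δ + 2 + ε) := by
                  apply mul_le_mul_of_nonneg_left _ (by positivity)
                  linarith
          have h4 : (0:ℝ) ≤ translationLength S (g ^ (p * c₀)) := tl_nonneg _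
          have h5 : (c₀ : ℝ) * (5 * δ + 2 + ε) ≤ E₀ := by
            have h6 : (0:ℝ) ≤ (c₀ : ℝ) * (T₀ + 1) * (3 * δ + ε) := by
              apply mul_nonneg (mul_nonneg (by positivity) (by linarith)); linarith
            simp only [hE₀]
            linarith
          have e1 : (p * (c₀:ℕ) : ℤ) = p * ((c₀:ℕ):ℤ) := by push_cast; ring
          rw [e1]
          linarith
      · -- good case
        have haR : T₀ ≤ (c₀ : ℝ) := by nlinarith [hc₀R, hκ, hT₀pos]
        have h4 : 4 * δ + 1 ≤ tp := by linarith
        have hlow := tl_pow_lower hδ hhyp hiso (g ^ p) (by rw [← htp]; exact h4) c₀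
        rw [← zpow_mul] at hlow
        have e1 : (p * (c₀:ℕ) : ℤ) = p * ((c₀:ℕ):ℤ) := by push_cast; ring
        refine ⟨c₀, hc₀pos, ?_, ?_⟩
        · rw [e1] at hlow ⊢
          have : T₀ ≤ (c₀ : ℝ) * (tp - 3 * δ) := by
            have h2 : (2:ℝ) ≤ tp - 3 * δ := by linarith
            calc T₀ ≤ (c₀:ℝ) := haR
              _ = (c₀:ℝ) * 1 := by ring
              _ ≤ (c₀:ℝ) * (tp - 3 * δ) := by
                  apply mul_le_mul_of_nonneg_left (by linarith) (by positivity)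
          linarith
        · have hdle : dist x ((g ^ p) ^ (c₀ : ℤ) • x) ≤ (c₀ : ℝ) * dist x (g ^ p • x) := by
            have := dist_pow_le hiso (g ^ p) x c₀
            rwa [← zpow_natCast (g ^ p) c₀] at this
          rw [← zpow_mul] at hdle
          rw [e1] at hlow ⊢
          have h3 : dist x (g ^ (p * ((c₀:ℕ):ℤ)) • x) ≤ (c₀ : ℝ) * (tp - 3 * δ) + (c₀:ℝ) * (3 * δ + ε) := by
            calc dist x (g ^ (p * ((c₀:ℕ):ℤ)) • x) ≤ (c₀ : ℝ) * dist x (g ^ p • x) := hdle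
              _ ≤ (c₀ : ℝ) * (tp + ε) := by
                  apply mul_le_mul_of_nonneg_left _ (by positivity)
                  exact hx
              _ = (c₀ : ℝ) * (tp - 3 * δ) + (c₀:ℝ) * (3 * δ + ε) := by ring
          have h5 : (c₀ : ℝ) * (3 * δ + ε) ≤ E₀ := by
            have h6 : (0:ℝ) ≤ (c₀ : ℝ) * (5 * δ + 2 + ε) := by
              apply mul_nonneg (by positivity); linarith
            have h7 : (c₀ : ℝ) * 1 * (3 * δ + ε) ≤ (c₀ : ℝ) * (T₀ + 1) * (3 * δ + ε) := by
              apply mul_le_mul_of_nonneg_right _ (by linarith)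
              apply mul_le_mul_of_nonneg_left (by linarith) (by positivity)
            simp only [hE₀]
            linarith
          linarith
    obtain ⟨a, hapos, htlH, hdist⟩ := key
    set N : ℤ := p * a with hN
    set H : G := g ^ N with hH
    have hN0 : N ≠ 0 := by
      simp only [hN]
      intro hcon
      rcases mul_eq_zero.mp hcon with h | h
      · exact hp h
      · omega
    -- find a good point w near x
    obtain ⟨kE, hkE⟩ := exists_nat_gt E₀
    obtain ⟨w, hwturn, hwsum⟩ := find_good hδ hhyp hiso H
      (by simp only [hH]; linarith [htlH, hT₀pos] : 2 * δ + 2 ≤ translationLength S H)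
      kE x (by
        simp only [hH]
        have : dist x (g ^ N • x) ≤ translationLength S (g ^ N) + E₀ := by
          simp only [hN]; exact_mod_cast hdist
        linarith [hkE])
    have hwstep : translationLength S H ≤ dist w (H • w) := tl_le hiso H w
    have hxw : dist x w ≤ E₀ := by
      have h1 : dist x (H • x) ≤ translationLength S H + E₀ := by
        simp only [hH, hN]
        exact_mod_cast hdist
      linarith [hwsum, hwstep]
    -- the chain through w
    set W : ℤ → S := fun j => H ^ j • w with hW
    have hWstep : ∀ j : ℤ, T₀ ≤ dist (W j) (W (j + 1)) := by
      intro j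
      simp only [hW]
      rw [orbit_step hiso H w j]
      simp only [hH] at hwstep ⊢
      linarith [htlH, hwstep]
    have hWturn : ∀ j : ℤ, GromovProd (W (j - 1)) (W (j + 1)) (W j) ≤ σ' := by
      intro j
      simp only [hW]
      rw [turn_orbit hiso H w j]
      exact hwturn
    -- W is within bounded distance of Λ
    set D₀ : ℝ := dist w₀ (g • w₀) with hD₀
    have hWbd : ∀ j : ℤ, Metric.infDist (W j) (Set.range Λ) ≤
        dist w w₀ + (c₀ : ℝ) * D₀ := by
      intro j
      set i : ℤ := (N * j) / (c₀ : ℤ) with hi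
      set r : ℤ := (N * j) % (c₀ : ℤ) with hr
      have hc₀Z : (0:ℤ) < (c₀ : ℤ) := by exact_mod_cast hc₀pos
      have hr0 : 0 ≤ r := Int.emod_nonneg _ (by omega)
      have hrlt : r < (c₀ : ℤ) := Int.emod_lt_of_pos _ hc₀Z
      have hdecomp : N * j = (c₀ : ℤ) * i + r := (Int.mul_ediv_add_emod (N * j) (c₀ : ℤ)).symm
      have hWj : W j = g ^ (N * j) • w := by
        simp only [hW, hH]
        rw [← zpow_mul]
      have hΛi : Λ i = g ^ ((c₀:ℤ) * i) • w₀ := by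
        simp only [hΛ, hH₀]
        rw [← zpow_mul]
      have h1 : dist (W j) (Λ i) ≤ dist w w₀ + (c₀ : ℝ) * D₀ := by
        rw [hWj, hΛi]
        calc dist (g ^ (N * j) • w) (g ^ ((c₀:ℤ) * i) • w₀)
            ≤ dist (g ^ (N * j) • w) (g ^ (N * j) • w₀)
              + dist (g ^ (N * j) • w₀) (g ^ ((c₀:ℤ) * i) • w₀) := dist_triangle _ _ _
          _ = dist w w₀ + dist (g ^ (N * j) • w₀) (g ^ ((c₀:ℤ) * i) • w₀) := by
              rw [dist_smul_eq hiso]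
          _ ≤ dist w w₀ + (c₀ : ℝ) * D₀ := by
              have e2 : g ^ (N * j) • w₀ = g ^ ((c₀:ℤ) * i) • (g ^ r • w₀) := by
                rw [smul_smul, ← zpow_add, ← hdecomp]
              rw [e2, dist_smul_eq hiso]
              have h3 : dist (g ^ r • w₀) w₀ ≤ |(r:ℝ)| * D₀ := by
                rw [dist_comm]
                simp only [hD₀]
                exact dist_zpow_le hiso g w₀ r
              have h4 : |(r:ℝ)| ≤ (c₀ : ℝ) := by
                rw [abs_of_nonneg (by exact_mod_cast hr0)]
                exact_mod_cast hrlt.le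
              have hD₀0 : 0 ≤ D₀ := dist_nonneg
              nlinarith [h3, h4]
      calc Metric.infDist (W j) (Set.range Λ) ≤ dist (W j) (Λ i) :=
            Metric.infDist_le_dist_of_mem ⟨i, rfl⟩
        _ ≤ _ := h1
    -- apply the parallel chains lemma
    have hpar := parallel_chains hδ hhyp hσ'0 hMcond hS₁0 Λ W hΛstepl hΛstepu hΛturn
      hWstep hWturn (dist w w₀ + (c₀ : ℝ) * D₀) hWbd
    -- W 0 = w
    have hW0 : W 0 = w := by simp only [hW]; rw [zpow_zero, one_smul]
    rw [hW0] at hpar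
    have hΛne : (Set.range Λ).Nonempty := Set.range_nonempty Λ
    obtain ⟨q, hqmem, hqd⟩ := (Metric.infDist_lt_iff hΛne).mp
      (lt_of_le_of_lt hpar (by simp only [hCb]; linarith : S₁ + 2 * σ' + 8 * δ + 1 < Cb + 1))
    obtain ⟨i, hieq⟩ := hqmem
    refine ⟨i, ?_⟩
    calc dist x (Λ i) ≤ dist x w + dist w (Λ i) := dist_triangle _ _ _
      _ ≤ E₀ + (Cb + 1) := by
          rw [hieq]
          exact add_le_add hxw hqd.le
      _ = C := by rw [hC]; ring
  -- finish: Hausdorff bound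
  refine ⟨2 * C, by linarith, ?_⟩
  intro n m hn hm
  rcases Set.eq_empty_or_nonempty (epsAxis S ε (g ^ n)) with hAn | hAn
  · rw [hAn, Metric.hausdorffDist_empty']
    linarith
  rcases Set.eq_empty_or_nonempty (epsAxis S ε (g ^ m)) with hAm | hAm
  · rw [hAm, Metric.hausdorffDist_empty]
    linarith
  have key : ∀ p q : ℤ, p ≠ 0 → q ≠ 0 → (epsAxis S ε (g ^ q)).Nonempty →
      ∀ x ∈ epsAxis S ε (g ^ p), ∃ y ∈ epsAxis S ε (g ^ q), dist x y ≤ 2 * C := by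
    intro p q hp hq ⟨y₀, hy₀⟩ x hxmem
    obtain ⟨ix, hix⟩ := main_near p hp x hxmem
    obtain ⟨iy, hiy⟩ := main_near q hq y₀ hy₀
    refine ⟨g ^ ((c₀:ℤ) * (ix - iy)) • y₀, axis_zpow_inv hiso g q _ ε y₀ hy₀, ?_⟩
    have hstep2 : dist (Λ ix) (g ^ ((c₀:ℤ) * (ix - iy)) • y₀) = dist (Λ iy) y₀ := by
      have e1 : Λ ix = g ^ ((c₀:ℤ) * (ix - iy)) • (Λ iy) := by
        simp only [hΛ, hH₀]
        rw [smul_smul, ← zpow_mul, ← zpow_mul, ← zpow_add]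
        congr 1
        ring
      rw [e1, dist_smul_eq hiso]
    calc dist x (g ^ ((c₀:ℤ) * (ix - iy)) • y₀)
        ≤ dist x (Λ ix) + dist (Λ ix) (g ^ ((c₀:ℤ) * (ix - iy)) • y₀) := dist_triangle _ _ _
      _ = dist x (Λ ix) + dist (Λ iy) y₀ := by rw [hstep2]
      _ ≤ C + C := by
          apply add_le_add hix
          rw [dist_comm]
          exact hiy
      _ = 2 * C := by ring
  apply Metric.hausdorffDist_le_of_mem_dist (by linarith)
  · exact key n m hn hm hAm
  · exact key m n hm hn hAn

end Final

/-- Let `g` be a loxodromic element of a group acting acylindrically on a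
`δ`-hyperbolic geodesic space `S`, and let `ε ≥ 0`. There is `ν = ν(δ,ε) > 0` bounding the
Hausdorff distance between the `ε`-axes of `gⁿ` and `gᵐ` for all nonzero integers `n, m`. -/
theorem epsAxis_hausdorffDist_bound {S G : Type*} [MetricSpace S] [Group G] [MulAction G S]
    (δ : ℝ) (hδ : 0 ≤ δ) (hhyp : DeltaHyperbolic δ S) (hiso : IsometricAction G S)
    (hacyl : AcylindricalAction G S) (ε : ℝ) (hε : 0 ≤ ε)
    (g : G) (hg : IsLoxodromicElt S g) :
    ∃ ν : ℝ, 0 < ν ∧ ∀ n m : ℤ, n ≠ 0 → m ≠ 0 →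
      Metric.hausdorffDist (epsAxis S ε (g ^ n)) (epsAxis S ε (g ^ m)) ≤ ν := by
  obtain ⟨s, κ, e, h1, h2, h3⟩ := hg
  exact epsAxis_hausdorffDist_bound' δ hδ hhyp hiso ε hε g ⟨s, κ, e, h1, h2, h3⟩
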